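/- arXiv:2402.02254 — 8 statements merged into one kernel-verified Lean document; each statement's English description precedes it below -/
import Mathlib

section
/- For constants D > 0, W > 0, and γ > 0, the function f(τ) = (τ/γ)·(2^(D/(W·τ)) − 1) defined for τ > 0 is strictly decreasing in τ. -/
/-!
Writing `c = D / W`, we have `τ (2 ^ (c / τ) - 1) = c · s (c / τ)` with `s x = (2 ^ x - 1) / x`
the slope of the chord of the strictly convex function `2 ^ x` between `0` and `x`. That slope
increases with `x`, and `c / τ` decreases with `τ`.
-/

open Real Set

theorem strictConvexOn_rpow_left {b : ℝ} (hb : 1 < b) :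
    StrictConvexOn ℝ univ fun x : ℝ => b ^ x := by
  refine ⟨convex_univ, fun x _ y _ hxy s t hs ht hst => ?_⟩
  have hlog : log b ≠ 0 := (log_pos hb).ne'
  have hexp := strictConvexOn_exp.2 (mem_univ (log b * x)) (mem_univ (log b * y))
    (by simpa [hlog] using hxy) hs ht hst
  simp only [rpow_def_of_pos (zero_lt_one.trans hb), smul_eq_mul] at hexp ⊢
  convert hexp using 2
  ring

theorem strictMonoOn_rpow_sub_one_div {b : ℝ} (hb : 1 < b) :
    StrictMonoOn (fun x : ℝ => (b ^ x - 1) / x) (Ioi 0) := fun x hx y hy hxy => by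
  simpa using (strictConvexOn_rpow_left hb).secant_strict_mono (mem_univ 0) (mem_univ x)
    (mem_univ y) (ne_of_gt hx) (ne_of_gt hy) hxy

theorem strictAntiOn_mul_rpow_div_sub_one {b c : ℝ} (hb : 1 < b) (hc : 0 < c) :
    StrictAntiOn (fun τ : ℝ => τ * (b ^ (c / τ) - 1)) (Ioi 0) := by
  rintro τ₁ (hτ₁ : 0 < τ₁) τ₂ (hτ₂ : 0 < τ₂) hτ
  have hslope : ∀ τ, 0 < τ → τ * (b ^ (c / τ) - 1) = c * ((b ^ (c / τ) - 1) / (c / τ)) := by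
    intro τ hτ
    field_simp
  simp only [hslope τ₁ hτ₁, hslope τ₂ hτ₂]
  exact mul_lt_mul_of_pos_left (strictMonoOn_rpow_sub_one_div hb (div_pos hc hτ₂)
    (div_pos hc hτ₁) (div_lt_div_of_pos_left hc hτ₁ hτ)) hc

/-- For constants `D > 0`, `W > 0`, `γ > 0`, the function
`f(τ) = (τ/γ)·(2^(D/(W·τ)) − 1)` is strictly decreasing on `(0, ∞)`. -/
theorem stmt_0 (D W γ : ℝ) (hD : 0 < D) (hW : 0 < W) (hγ : 0 < γ) :
    StrictAntiOn (fun τ : ℝ => (τ / γ) * ((2 : ℝ) ^ (D / (W * τ)) - 1)) (Set.Ioi 0) := by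
  intro τ₁ hτ₁ τ₂ hτ₂ hτ
  have h := strictAntiOn_mul_rpow_div_sub_one one_lt_two (div_pos hD hW) hτ₁ hτ₂ hτ
  simp only [div_div] at h
  simp only [div_mul_eq_mul_div]
  exact div_lt_div_of_pos_right h hγ
end

section
/- For constants D > 0, W > 0, γ > 0, the function f(τ) = (τ/γ)·(2^(D/(W·τ)) − 1) tends to D·ln 2/(W·γ) as τ → ∞ and tends to +∞ as τ → 0⁺. Consequently, for every τ₀ > D·ln 2/(W·γ) there exists a unique τ > 0 with f(τ) = τ₀. -/
/-!
Writing `a = D ln 2 / W`, we have `2 ^ (D / (W τ)) = exp (a / τ)` and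
`τ (exp (a / τ) - 1) = a · g (a / τ)`, where `g u = (exp u - 1) / u` is the slope of `exp` between
`0` and `u`. As `τ → ∞`, `g (a / τ)` tends to `exp' 0 = 1`; as `τ → 0⁺`, `g (a / τ) → ∞`; and `g` is
strictly increasing on `(0, ∞)` because `exp` is strictly convex. So `f` decreases strictly and
continuously from `+∞` to `a / γ`, and the intermediate value theorem gives existence and uniqueness.
-/

open Filter Topology Set

namespace Real

-- Holds for all `a` and `τ` since `x / 0 = 0`.
lemma mul_exp_div_sub_one_eq (a τ : ℝ) :
    τ * (exp (a / τ) - 1) = a * ((exp (a / τ) - 1) / (a / τ)) := by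
  rcases eq_or_ne τ 0 with rfl | hτ
  · simp
  rcases eq_or_ne a 0 with rfl | ha
  · simp
  field_simp

lemma tendsto_exp_sub_one_div_nhdsNE_zero :
    Tendsto (fun u => (exp u - 1) / u) (𝓝[≠] 0) (𝓝 1) := by
  have h := hasDerivAt_iff_tendsto_slope.mp (hasDerivAt_exp 0)
  rw [exp_zero] at h
  exact h.congr fun u => by simp [slope_def_field]

lemma tendsto_exp_sub_one_div_atTop :
    Tendsto (fun u => (exp u - 1) / u) atTop atTop := by
  have h := (tendsto_exp_div_pow_atTop 1).atTop_add tendsto_inv_atTop_zero.neg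
  refine h.congr fun u => ?_
  ring

lemma strictMonoOn_exp_sub_one_div :
    StrictMonoOn (fun u => (exp u - 1) / u) (Ioi 0) := by
  intro u (hu : 0 < u) v (hv : 0 < v) huv
  simpa using strictConvexOn_exp.secant_strict_mono (mem_univ 0) (mem_univ u) (mem_univ v)
    hu.ne' hv.ne' huv

lemma tendsto_mul_exp_div_sub_one_atTop (a : ℝ) :
    Tendsto (fun τ => τ * (exp (a / τ) - 1)) atTop (𝓝 a) := by
  rcases eq_or_ne a 0 with rfl | ha
  · simp
  have hlim : Tendsto (fun τ => a / τ) atTop (𝓝[≠] 0) := by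
    refine tendsto_nhdsWithin_iff.mpr ⟨tendsto_const_nhds.div_atTop tendsto_id, ?_⟩
    filter_upwards [eventually_gt_atTop 0] with τ hτ using div_ne_zero ha hτ.ne'
  simp_rw [mul_exp_div_sub_one_eq a]
  simpa using (tendsto_exp_sub_one_div_nhdsNE_zero.comp hlim).const_mul a

lemma tendsto_mul_exp_div_sub_one_nhdsGT_zero {a : ℝ} (ha : 0 < a) :
    Tendsto (fun τ => τ * (exp (a / τ) - 1)) (𝓝[>] 0) atTop := by
  have hlim : Tendsto (fun τ => a / τ) (𝓝[>] 0) atTop := by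
    simpa only [div_eq_mul_inv] using tendsto_inv_nhdsGT_zero.const_mul_atTop ha
  simp_rw [mul_exp_div_sub_one_eq a]
  exact (tendsto_exp_sub_one_div_atTop.comp hlim).const_mul_atTop ha

lemma strictAntiOn_mul_exp_div_sub_one {a : ℝ} (ha : 0 < a) :
    StrictAntiOn (fun τ => τ * (exp (a / τ) - 1)) (Ioi 0) := by
  intro s (hs : 0 < s) t (ht : 0 < t) hst
  simp only [mul_exp_div_sub_one_eq a]
  exact mul_lt_mul_of_pos_left (strictMonoOn_exp_sub_one_div (div_pos ha ht) (div_pos ha hs)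
    (div_lt_div_of_pos_left ha hs hst)) ha

lemma continuousOn_mul_exp_div_sub_one (a : ℝ) :
    ContinuousOn (fun τ => τ * (exp (a / τ) - 1)) (Ioi 0) := by
  have : ∀ τ ∈ Ioi (0 : ℝ), τ ≠ 0 := fun τ hτ => ne_of_gt hτ
  fun_prop (disch := assumption)

end Real

lemma existsUnique_eq_of_strictAntiOn_Ioi {F : ℝ → ℝ} {b L y : ℝ}
    (hcont : ContinuousOn F (Ioi b)) (hanti : StrictAntiOn F (Ioi b))
    (hb : Tendsto F (𝓝[>] b) atTop) (htop : Tendsto F atTop (𝓝 L)) (hy : L < y) :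
    ∃! τ, b < τ ∧ F τ = y := by
  obtain ⟨s, hys, hbs⟩ := ((hb.eventually_gt_atTop y).and self_mem_nhdsWithin).exists
  obtain ⟨t, hst, hty⟩ :=
    ((eventually_ge_atTop s).and (htop.eventually (gt_mem_nhds hy))).exists
  have hsub : Icc s t ⊆ Ioi b := fun x hx => lt_of_lt_of_le hbs hx.1
  obtain ⟨τ, hτ, hFτ⟩ := intermediate_value_Icc' hst (hcont.mono hsub) ⟨hty.le, hys.le⟩
  refine ⟨τ, ⟨hsub hτ, hFτ⟩, fun σ ⟨hσ, hFσ⟩ => hanti.injOn hσ (hsub hτ) ?_⟩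
  rw [hFσ, hFτ]

/-- `f(τ) = (τ/γ)(2^(D/(Wτ)) − 1)` tends to `D ln 2/(Wγ)` as `τ → ∞`, tends to `+∞`
as `τ → 0⁺`, and consequently for every `τ₀ > D ln 2/(Wγ)` there is a unique `τ > 0`
with `f(τ) = τ₀`. -/
theorem stmt_1 (D W γ : ℝ) (hD : 0 < D) (hW : 0 < W) (hγ : 0 < γ) :
    Tendsto (fun τ : ℝ => (τ / γ) * ((2 : ℝ) ^ (D / (W * τ)) - 1)) atTop
      (𝓝 (D * Real.log 2 / (W * γ))) ∧
    Tendsto (fun τ : ℝ => (τ / γ) * ((2 : ℝ) ^ (D / (W * τ)) - 1)) (𝓝[>] 0) atTop ∧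
    ∀ τ₀ : ℝ, D * Real.log 2 / (W * γ) < τ₀ →
      ∃! τ : ℝ, 0 < τ ∧ (τ / γ) * ((2 : ℝ) ^ (D / (W * τ)) - 1) = τ₀ := by
  set a := D * Real.log 2 / W
  have ha : 0 < a := div_pos (mul_pos hD (Real.log_pos one_lt_two)) hW
  have hf (τ : ℝ) :
      (τ / γ) * ((2 : ℝ) ^ (D / (W * τ)) - 1) = τ * (Real.exp (a / τ) - 1) / γ := by
    rw [Real.rpow_def_of_pos two_pos, show Real.log 2 * (D / (W * τ)) = a / τ by ring]
    ring
  simp only [hf, show D * Real.log 2 / (W * γ) = a / γ by ring, div_eq_iff hγ.ne']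
  refine ⟨(Real.tendsto_mul_exp_div_sub_one_atTop a).div_const γ,
    (Real.tendsto_mul_exp_div_sub_one_nhdsGT_zero ha).atTop_div_const hγ, fun τ₀ hτ₀ => ?_⟩
  exact existsUnique_eq_of_strictAntiOn_Ioi (Real.continuousOn_mul_exp_div_sub_one a)
    (Real.strictAntiOn_mul_exp_div_sub_one ha) (Real.tendsto_mul_exp_div_sub_one_nhdsGT_zero ha)
    (Real.tendsto_mul_exp_div_sub_one_atTop a) ((div_lt_iff₀ hγ).mp hτ₀)
end

section
/- Fix D > 0, W > 0, g > 0, N₀ > 0. The minimum transmission time needed to send D bits at power P, namely T(P) = D/(W·log₂(1 + P·g/(W·N₀))), is strictly decreasing and convex in P on (0, ∞). -/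
/-- The minimum transmission time `T(P) = D/(W·log₂(1 + P·g/(W·N₀)))` is strictly
decreasing and convex on `(0, ∞)`. -/
theorem stmt_3 (D W g N₀ : ℝ) (hD : 0 < D) (hW : 0 < W) (hg : 0 < g) (hN₀ : 0 < N₀) :
    StrictAntiOn (fun P : ℝ => D / (W * Real.logb 2 (1 + P * g / (W * N₀)))) (Set.Ioi 0) ∧
    ConvexOn ℝ (Set.Ioi 0) (fun P : ℝ => D / (W * Real.logb 2 (1 + P * g / (W * N₀)))) := by
  set c : ℝ := g / (W * N₀) with hc
  have hcpos : 0 < c := div_pos hg (mul_pos hW hN₀)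
  set K : ℝ := D * Real.log 2 / W with hK
  have hKpos : 0 < K := div_pos (mul_pos hD (Real.log_pos one_lt_two)) hW
  have hfun : (fun P : ℝ => D / (W * Real.logb 2 (1 + P * g / (W * N₀)))) =
      fun P : ℝ => K * (Real.log (1 + P * c))⁻¹ := by
    funext P
    rw [Real.logb, mul_div_assoc P g (W * N₀), ← hc, hK]
    generalize Real.log (1 + P * c) = l
    rcases eq_or_ne l 0 with rfl | hl
    · simp
    · field_simp
  have hlog : ∀ P : ℝ, P ∈ Set.Ioi (0:ℝ) → 0 < Real.log (1 + P * c) := fun P hP =>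
    Real.log_pos (by nlinarith [mul_pos (Set.mem_Ioi.mp hP) hcpos])
  rw [hfun]
  constructor
  · intro x hx y hy hxy
    have hlx := hlog x hx
    have hly := hlog y hy
    have h1 : Real.log (1 + x * c) < Real.log (1 + y * c) := by
      apply Real.log_lt_log (by nlinarith [mul_pos (Set.mem_Ioi.mp hx) hcpos])
      nlinarith [mul_pos (Set.mem_Ioi.mp hx) hcpos]
    have h2 : (Real.log (1 + y * c))⁻¹ < (Real.log (1 + x * c))⁻¹ :=
      inv_strictAnti₀ hlx h1
    exact mul_lt_mul_of_pos_left h2 hKpos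
  · refine ⟨convex_Ioi 0, fun x hx y hy a b ha hb hab => ?_⟩
    simp only [smul_eq_mul]
    have hlx := hlog x hx
    have hly := hlog y hy
    have hmem : a • x + b • y ∈ Set.Ioi (0:ℝ) := (convex_Ioi 0) hx hy ha hb hab
    have hlm := hlog _ hmem
    -- concavity of log gives: a*log(1+xc)+b*log(1+yc) ≤ log(1+(a x+b y)c)
    have hconc : a * Real.log (1 + x * c) + b * Real.log (1 + y * c) ≤
        Real.log (1 + (a * x + b * y) * c) := by
      have := (strictConcaveOn_log_Ioi.concaveOn).2 (x := 1 + x * c) (y := 1 + y * c)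
        (Set.mem_Ioi.mpr (by nlinarith [mul_pos (Set.mem_Ioi.mp hx) hcpos]))
        (Set.mem_Ioi.mpr (by nlinarith [mul_pos (Set.mem_Ioi.mp hy) hcpos])) ha hb hab
      simp only [smul_eq_mul] at this
      have heq : a * (1 + x * c) + b * (1 + y * c) = 1 + (a * x + b * y) * c := by
        have : a + b = 1 := hab
        ring_nf
        nlinarith [this]
      rw [heq] at this
      linarith
    have hpos2 : 0 < a * Real.log (1 + x * c) + b * Real.log (1 + y * c) := by
      nlinarith [mul_le_mul_of_nonneg_left (min_le_left (Real.log (1 + x * c)) (Real.log (1 + y * c))) ha,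
        mul_le_mul_of_nonneg_left (min_le_right (Real.log (1 + x * c)) (Real.log (1 + y * c))) hb,
        lt_min hlx hly]
    have step1 : (Real.log (1 + (a * x + b * y) * c))⁻¹ ≤
        (a * Real.log (1 + x * c) + b * Real.log (1 + y * c))⁻¹ := by
      apply inv_anti₀ hpos2
      simpa [smul_eq_mul] using hconc
    have step2 : (a * Real.log (1 + x * c) + b * Real.log (1 + y * c))⁻¹ ≤
        a * (Real.log (1 + x * c))⁻¹ + b * (Real.log (1 + y * c))⁻¹ := by
      have := (convexOn_zpow (-1 : ℤ) (𝕜 := ℝ)).2 (Set.mem_Ioi.mpr hlx) (Set.mem_Ioi.mpr hly) ha hb hab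
      simpa [smul_eq_mul, zpow_neg, zpow_one] using this
    calc K * (Real.log (1 + (a * x + b * y) * c))⁻¹
        ≤ K * (a * (Real.log (1 + x * c))⁻¹ + b * (Real.log (1 + y * c))⁻¹) :=
          mul_le_mul_of_nonneg_left (step1.trans step2) hKpos.le
      _ = a * (K * (Real.log (1 + x * c))⁻¹) + b * (K * (Real.log (1 + y * c))⁻¹) := by ring
end

section
/- Fix D > 0, W > 0, g > 0, N₀ > 0. The energy consumed to transmit D bits at power P, namely E(P) = P·D/(W·log₂(1 + P·g/(W·N₀))), is strictly increasing in P on (0, ∞). -/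
/-!
The energy is `E(P) = (D log 2 / (W c)) · x / log (1 + x)` with `x = c P` and `c = g / (W N₀)`,
so it suffices that `x / log (1 + x)` increases on `(0, ∞)`. Its reciprocal `log (1 + x) / x` is
the slope of the secant of the strictly concave `log` between `1` and `1 + x`, hence strictly
decreasing in `x`.
-/

open Real Set

lemma log_one_add_div_self_strictAntiOn : StrictAntiOn (fun x : ℝ => log (1 + x) / x) (Ioi 0) := by
  intro x hx y hy hxy
  have hx' : (0 : ℝ) < 1 + x := by linarith [mem_Ioi.1 hx]
  have hy' : (0 : ℝ) < 1 + y := by linarith [mem_Ioi.1 hy]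
  have h := strictConcaveOn_log_Ioi.secant_strict_mono (mem_Ioi.2 one_pos) (mem_Ioi.2 hx')
    (mem_Ioi.2 hy') (by linarith [mem_Ioi.1 hx]) (by linarith [mem_Ioi.1 hy]) (by linarith)
  simpa only [log_one, sub_zero, add_sub_cancel_left] using h

lemma div_log_one_add_strictMonoOn : StrictMonoOn (fun x : ℝ => x / log (1 + x)) (Ioi 0) := by
  intro x hx y hy hxy
  have hpos : ∀ t ∈ Ioi (0 : ℝ), 0 < log (1 + t) / t := fun t ht =>
    div_pos (log_pos (by linarith [mem_Ioi.1 ht])) ht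
  simpa only [inv_div] using
    inv_strictAntiOn (hpos y hy) (hpos x hx) (log_one_add_div_self_strictAntiOn hx hy hxy)

/-- The energy `E(P) = P·D/(W·log₂(1 + P·g/(W·N₀)))` needed to transmit `D` bits at
power `P` is strictly increasing on `(0, ∞)`. -/
theorem stmt_4 (D W g N₀ : ℝ) (hD : 0 < D) (hW : 0 < W) (hg : 0 < g) (hN₀ : 0 < N₀) :
    StrictMonoOn (fun P : ℝ => P * D / (W * Real.logb 2 (1 + P * g / (W * N₀))))
      (Set.Ioi 0) := by
  set c := g / (W * N₀) with hc_def
  have hc : 0 < c := by positivity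
  have hE : ∀ P : ℝ, P * D / (W * logb 2 (1 + P * g / (W * N₀))) =
      D * log 2 / (W * c) * (P * c / log (1 + P * c)) := by
    intro P
    rw [mul_div_assoc P g, ← hc_def, logb]
    field_simp
  intro P hP Q hQ hPQ
  simp only [hE]
  have hscaled := div_log_one_add_strictMonoOn (mul_pos (mem_Ioi.1 hP) hc)
    (mul_pos (mem_Ioi.1 hQ) hc) (mul_lt_mul_of_pos_right hPQ hc)
  exact mul_lt_mul_of_pos_left hscaled (by positivity)
end

section
/- Let D, W, γ > 0 with γ > 1, and let α = W₀((γ−1)/e) + 1 where W₀ is the principal Lambert W branch. Define g(τ₀) = τ₀ + τ(τ₀) where τ(τ₀) is the unique solution of τ₀ = (τ/γ)(2^{D/(Wτ)} − 1). Then the function h(τ) = (τ/γ)(2^{D/(Wτ)} − 1) + τ of the transmission duration τ is minimized at τ* = D·ln 2/(W·α), and the corresponding minimizing harvesting time is τ₀* = (D·ln 2/(W·α·γ))·(2^{α/ln 2} − 1). -/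
/-!
With `c = D log 2 / W` we have `2 ^ (D / (W τ)) = exp (c / τ)`, and the substitution `x = c / τ`
turns the total time into `(c / γ) (exp x + γ - 1) / x`. The Lambert-W equation says exactly
`γ - 1 = (α - 1) exp α`, so the tangent line of `exp` at `α` gives `x exp α ≤ exp x + γ - 1`,
with equality at `x = α`, i.e. at `τ = c / α`.
-/

open Real Set

lemma mul_exp_le_exp_add_sub_one_mul_exp (x a : ℝ) : x * exp a ≤ exp x + (a - 1) * exp a := by
  have htangent : x - a + 1 ≤ exp (x - a) := add_one_le_exp _
  have hsplit : exp (x - a) * exp a = exp x := by rw [← exp_add, sub_add_cancel]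
  nlinarith [exp_pos a]

lemma mul_exp_add_one_eq_of_mul_exp_eq {w y : ℝ} (h : w * exp w = y / exp 1) :
    w * exp (w + 1) = y := by
  rw [exp_add, ← mul_assoc, h, div_mul_cancel₀ _ (exp_pos 1).ne']

lemma isMinOn_div_mul_exp_sub_one_add {c γ a : ℝ} (hc : 0 < c) (hγ : 0 < γ) (ha : 0 < a)
    (hlambert : (a - 1) * exp a = γ - 1) :
    IsMinOn (fun τ : ℝ => τ / γ * (exp (c / τ) - 1) + τ) (Ioi 0) (c / a) := by
  refine isMinOn_iff.mpr fun τ (hτ : 0 < τ) => ?_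
  have hfactor : τ / γ * (exp (c / τ) - 1) + τ = τ / γ * (exp (c / τ) + (a - 1) * exp a) := by
    rw [hlambert]; field_simp; ring
  have hvalue : c / a / γ * (exp (c / (c / a)) - 1) + c / a = c / γ * exp a := by
    rw [div_div_cancel₀ hc.ne']; field_simp; linear_combination -hlambert
  rw [hfactor, hvalue]
  calc c / γ * exp a = τ / γ * (c / τ * exp a) := by field_simp
    _ ≤ τ / γ * (exp (c / τ) + (a - 1) * exp a) := by
      gcongr; exact mul_exp_le_exp_add_sub_one_mul_exp _ _

/-- Single-source schedule minimization: with `α = W₀((γ−1)/e) + 1` (where `w ≥ 0`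
satisfies the Lambert-W equation `w·e^w = (γ−1)/e`), the total-time function
`h(τ) = (τ/γ)(2^{D/(Wτ)} − 1) + τ` on `(0,∞)` is minimized at
`τ* = D·ln 2/(W·α)`, and the corresponding harvesting time is
`τ₀* = (D·ln 2/(W·α·γ))·(2^{α/ln 2} − 1)`. -/
theorem stmt_8 (D W γ w α : ℝ) (hD : 0 < D) (hW : 0 < W) (hγ : 1 < γ)
    (hw : 0 ≤ w) (hwE : w * Real.exp w = (γ - 1) / Real.exp 1) (hα : α = w + 1) :
    IsMinOn (fun τ : ℝ => (τ / γ) * ((2 : ℝ) ^ (D / (W * τ)) - 1) + τ) (Set.Ioi 0)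
      (D * Real.log 2 / (W * α)) ∧
    (D * Real.log 2 / (W * α) / γ) *
        ((2 : ℝ) ^ (D / (W * (D * Real.log 2 / (W * α)))) - 1) =
      (D * Real.log 2 / (W * α * γ)) * ((2 : ℝ) ^ (α / Real.log 2) - 1) := by
  have hlog2 : 0 < log 2 := log_pos one_lt_two
  have hα0 : 0 < α := by linarith
  have hlambert : (α - 1) * exp α = γ - 1 := by
    subst hα; rw [add_sub_cancel_right]; exact mul_exp_add_one_eq_of_mul_exp_eq hwE
  have hrpow : (fun τ : ℝ => (2 : ℝ) ^ (D / (W * τ))) = fun τ => exp (D * log 2 / W / τ) := by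
    funext τ; rw [rpow_def_of_pos two_pos]; ring_nf
  refine ⟨?_, ?_⟩
  · have hτ : D * log 2 / (W * α) = D * log 2 / W / α := by rw [div_div]
    rw [hτ]; simp only [congrFun hrpow]
    exact isMinOn_div_mul_exp_sub_one_add (by positivity) (by linarith) hα0 hlambert
  · rw [div_div]; congr 3; field_simp
end

section
/- For a source with demand D > 0, bandwidth W > 0, channel gain g > 0, noise density N₀ > 0, maximum power P^max > 0, and harvested power rate φ > 0 (so harvested energy is φ·τ₀), define τ^P = D/(W·log₂(1 + P^max·g/(W·N₀))) and τ̈₀ = P^max·τ^P/φ. Then for any harvesting time τ̄₀ ≥ τ̈₀, the minimum feasible transmission time subject to P ≤ P^max, P·τ ≤ φ·τ̄₀, and τ·W·log₂(1 + P·g/(W·N₀)) ≥ D equals τ^P (achieved at P = P^max). -/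
/-- Energy-unconstrained regime: if the harvesting time `τ̄₀` is at least
`τ̈₀ = P^max·τ^P/φ`, where `τ^P = D/(W·log₂(1 + P^max·g/(W·N₀)))`, then the minimum
feasible transmission time (subject to `P ≤ P^max`, energy causality
`P·τ ≤ φ·τ̄₀`, and the demand constraint) equals `τ^P`. -/
theorem stmt_11 (D W g N₀ Pmax φ τ₀ : ℝ) (hD : 0 < D) (hW : 0 < W) (hg : 0 < g)
    (hN₀ : 0 < N₀) (hP : 0 < Pmax) (hφ : 0 < φ)
    (hτ₀ : Pmax * (D / (W * Real.logb 2 (1 + Pmax * g / (W * N₀)))) / φ ≤ τ₀) :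
    IsLeast {τ : ℝ | 0 < τ ∧ ∃ P : ℝ, 0 ≤ P ∧ P ≤ Pmax ∧ P * τ ≤ φ * τ₀ ∧
        D ≤ τ * (W * Real.logb 2 (1 + P * g / (W * N₀)))}
      (D / (W * Real.logb 2 (1 + Pmax * g / (W * N₀)))) := by
  have hWN : 0 < W * N₀ := mul_pos hW hN₀
  have hx : (1:ℝ) < 1 + Pmax * g / (W * N₀) := by
    have : 0 < Pmax * g / (W * N₀) := div_pos (mul_pos hP hg) hWN
    linarith
  have hL : 0 < Real.logb 2 (1 + Pmax * g / (W * N₀)) :=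
    Real.logb_pos one_lt_two hx
  have hWL : 0 < W * Real.logb 2 (1 + Pmax * g / (W * N₀)) := mul_pos hW hL
  have hτP : 0 < D / (W * Real.logb 2 (1 + Pmax * g / (W * N₀))) := div_pos hD hWL
  constructor
  · refine ⟨hτP, Pmax, hP.le, le_refl _, ?_, ?_⟩
    · have := (div_le_iff₀ hφ).mp hτ₀
      linarith [this]
    · rw [div_mul_cancel₀ _ hWL.ne']
  · rintro τ ⟨hτ, P, hP0, hPle, _, hDem⟩
    have hx2 : (0:ℝ) < 1 + P * g / (W * N₀) := by
      have : 0 ≤ P * g / (W * N₀) := div_nonneg (mul_nonneg hP0 hg.le) hWN.le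
      linarith
    have hmono : Real.logb 2 (1 + P * g / (W * N₀)) ≤
        Real.logb 2 (1 + Pmax * g / (W * N₀)) := by
      have h12 : (1:ℝ) ≤ 2 := one_le_two
      gcongr <;> linarith
    have h1 : D ≤ τ * (W * Real.logb 2 (1 + Pmax * g / (W * N₀))) := by
      calc D ≤ τ * (W * Real.logb 2 (1 + P * g / (W * N₀))) := hDem
        _ ≤ _ := by
          apply mul_le_mul_of_nonneg_left _ hτ.le
          exact mul_le_mul_of_nonneg_left hmono hW.le
    exact (div_le_iff₀ hWL).mpr (by linarith)
end

section
/- In the setting of the single-source subproblem (demand D, bandwidth W, gain g, noise N₀, harvested power rate φ), if the harvesting time τ̄₀ < τ̈₀ = P^max·τ^P/φ, then at the optimum of minimizing the transmission time τ subject to P ≤ P^max, P·τ ≤ φ·τ̄₀, and τ·W·log₂(1 + P·g/(W·N₀)) ≥ D, both the energy constraint and the demand constraint hold with equality, and the optimal τ solves τ̄₀ = (τ/γ)(2^{D/(Wτ)} − 1) with γ = g·φ/(W·N₀). -/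
/-- Energy-constrained regime: if `τ̄₀ < τ̈₀ = P^max·τ^P/φ`, then at the optimum of
the single-source subproblem both the energy and the demand constraints hold with
equality, and the optimal transmission time `τ` solves
`τ̄₀ = (τ/γ)(2^{D/(Wτ)} − 1)` with `γ = g·φ/(W·N₀)`. -/
theorem stmt_12 (D W g N₀ Pmax φ τ₀ τ : ℝ) (hD : 0 < D) (hW : 0 < W) (hg : 0 < g)
    (hN₀ : 0 < N₀) (hP : 0 < Pmax) (hφ : 0 < φ) (hτ₀pos : 0 < τ₀)
    (hτ₀ : τ₀ < Pmax * (D / (W * Real.logb 2 (1 + Pmax * g / (W * N₀)))) / φ)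
    (hopt : IsLeast {t : ℝ | 0 < t ∧ ∃ P : ℝ, 0 ≤ P ∧ P ≤ Pmax ∧ P * t ≤ φ * τ₀ ∧
        D ≤ t * (W * Real.logb 2 (1 + P * g / (W * N₀)))} τ) :
    (∃ P : ℝ, 0 < P ∧ P ≤ Pmax ∧ P * τ = φ * τ₀ ∧
        D = τ * (W * Real.logb 2 (1 + P * g / (W * N₀)))) ∧
    τ₀ = (τ / (g * φ / (W * N₀))) * ((2 : ℝ) ^ (D / (W * τ)) - 1) := by
  obtain ⟨⟨hτpos, P, hP0, hPmax, hE, hDc⟩, hlb⟩ := hopt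
  have hWN : 0 < W * N₀ := mul_pos hW hN₀
  set L : ℝ → ℝ := fun p => Real.logb 2 (1 + p * g / (W * N₀)) with hLdef
  have hDc' : D ≤ τ * (W * L P) := hDc
  -- L P > 0
  have hLpos : 0 < L P := by
    by_contra h
    push_neg at h
    nlinarith [mul_pos hτpos hW]
  -- P > 0
  have hPpos : 0 < P := by
    by_contra h
    push_neg at h
    have h1 : 1 + P * g / (W * N₀) ≤ 1 := by
      have : P * g ≤ 0 := mul_nonpos_of_nonpos_of_nonneg h hg.le
      have : P * g / (W * N₀) ≤ 0 := div_nonpos_of_nonpos_of_nonneg this hWN.le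
      linarith
    have := Real.logb_nonpos (by norm_num : (1:ℝ) < 2)
      (by positivity : (0:ℝ) ≤ 1 + P * g / (W * N₀)) h1
    exact absurd this (not_le.mpr hLpos)
  -- a general feasibility lemma: any power p with these properties gives
  -- feasible time D/(W * L p)
  have feas : ∀ p : ℝ, 0 ≤ p → p ≤ Pmax → p * τ ≤ φ * τ₀ → 0 < L p →
      D / (W * L p) ≤ τ → τ ≤ D / (W * L p) := by
    intro p hp0 hpmax hpE hLp hle
    apply hlb
    have htpos : 0 < D / (W * L p) := by positivity
    refine ⟨htpos, p, hp0, hpmax, ?_, ?_⟩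
    · calc p * (D / (W * L p)) ≤ p * τ := by
            exact mul_le_mul_of_nonneg_left hle hp0
        _ ≤ φ * τ₀ := hpE
    · rw [div_mul_cancel₀]
      positivity
  -- demand equality
  have hts_le : D / (W * L P) ≤ τ := by
    rw [div_le_iff₀ (by positivity)]
    linarith [hDc']
  have hτeq : τ = D / (W * L P) :=
    le_antisymm (feas P hP0 hPmax hE hLpos hts_le) hts_le
  have hDeq : D = τ * (W * L P) := by
    rw [hτeq, div_mul_cancel₀]
    positivity
  -- energy equality
  have hEeq : P * τ = φ * τ₀ := by
    by_contra hne
    have hElt : P * τ < φ * τ₀ := lt_of_le_of_ne hE hne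
    rcases lt_or_eq_of_le hPmax with hPlt | hPe
    · -- P < Pmax : perturb the power upwards
      set P' := min Pmax (φ * τ₀ / τ) with hP'def
      have hPP' : P < P' := by
        apply lt_min hPlt
        rw [lt_div_iff₀ hτpos]
        linarith [hElt]
      have hP'max : P' ≤ Pmax := min_le_left _ _
      have hP'E : P' * τ ≤ φ * τ₀ := by
        have : P' ≤ φ * τ₀ / τ := min_le_right _ _
        calc P' * τ ≤ (φ * τ₀ / τ) * τ := mul_le_mul_of_nonneg_right this hτpos.le
          _ = φ * τ₀ := by field_simp
      have hLmono : L P < L P' := by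
        apply Real.logb_lt_logb (by norm_num)
        · positivity
        · have : P * g < P' * g := mul_lt_mul_of_pos_right hPP' hg
          have h2 : P * g / (W * N₀) < P' * g / (W * N₀) :=
            div_lt_div_of_pos_right this hWN
          linarith
      have hLP' : 0 < L P' := lt_trans hLpos hLmono
      have htlt : D / (W * L P') < D / (W * L P) := by
        apply div_lt_div_of_pos_left hD (by positivity)
        exact mul_lt_mul_of_pos_left hLmono hW
      rw [← hτeq] at htlt
      have := feas P' (le_trans hP0 hPP'.le) hP'max hP'E hLP' htlt.le
      linarith
    · -- P = Pmax : contradiction with hτ₀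
      subst hPe
      have : τ₀ < P * τ / φ := by
        rw [hτeq]; exact hτ₀
      have : φ * τ₀ < P * τ := by
        rw [lt_div_iff₀ hφ] at this
        linarith
      linarith
  constructor
  · exact ⟨P, hPpos, hPmax, hEeq, hDeq⟩
  · -- the final equation
    have hx : 0 < 1 + P * g / (W * N₀) := by positivity
    have hLval : D / (W * τ) = L P := by
      rw [hDeq]; field_simp
    have hpow : (2 : ℝ) ^ (D / (W * τ)) = 1 + P * g / (W * N₀) := by
      rw [hLval, hLdef]
      exact Real.rpow_logb (by norm_num) (by norm_num) hx
    rw [hpow]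
    have hPval : P = φ * τ₀ / τ := by
      field_simp at hEeq ⊢
      linarith [hEeq]
    rw [hPval]
    field_simp
    ring
end

section
/- For D > 0, W > 0, γ > 0, the implicitly defined function τ(τ₀) given by τ₀ = (τ/γ)(2^{D/(W·τ)} − 1) is convex and strictly decreasing in τ₀ on its domain (D·ln 2/(W·γ), ∞). -/
/-!
With `c = D·ln 2 / W`, the defining relation reads `g(τ(τ₀)) = γ·τ₀` for
`g τ = τ (exp (c/τ) - 1)`. On `(0, ∞)` the function `g` is strictly decreasing
(`g' τ = e^u (1 - u) - 1 < 0` with `u = c/τ`, since `1 - u < e^{-u}`) and convex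
(`g'' τ = e^u c² / τ³ > 0`). Since `g ∘ τ` is increasing and affine, for `z = a x + b y`
convexity gives `g(a τ(x) + b τ(y)) ≤ a g(τ(x)) + b g(τ(y)) = g(τ(z))`, and because `g`
is strictly decreasing this reverses to `τ(z) ≤ a τ(x) + b τ(y)`.
-/

open Real Set

section Inverse

variable {E : Type*} {s : Set ℝ} {u : Set E} {g : ℝ → ℝ} {t : E → ℝ}

theorem StrictAntiOn.strictAntiOn_of_strictMonoOn_comp [Preorder E] (hg : StrictAntiOn g s)
    (ht : MapsTo t u s) (hgt : StrictMonoOn (g ∘ t) u) : StrictAntiOn t u := by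
  intro x hx y hy hxy
  exact (hg.lt_iff_gt (ht hx) (ht hy)).mp (hgt hx hy hxy)

theorem ConvexOn.convexOn_of_concaveOn_comp [AddCommGroup E] [Module ℝ E]
    (hg : ConvexOn ℝ s g) (hg' : StrictAntiOn g s) (ht : MapsTo t u s)
    (hgt : ConcaveOn ℝ u (g ∘ t)) : ConvexOn ℝ u t := by
  refine ⟨hgt.1, fun x hx y hy a b ha hb hab => ?_⟩
  have hz : a • x + b • y ∈ u := hgt.1 hx hy ha hb hab
  have hmix : a • t x + b • t y ∈ s := hg.1 (ht hx) (ht hy) ha hb hab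
  refine (hg'.le_iff_ge hmix (ht hz)).mp ?_
  calc g (a • t x + b • t y) ≤ a • g (t x) + b • g (t y) :=
        hg.2 (ht hx) (ht hy) ha hb hab
    _ ≤ g (t (a • x + b • y)) := hgt.2 hx hy ha hb hab

end Inverse

section ExpPerspective

variable {c x : ℝ}

theorem hasDerivAt_const_div (hx : x ≠ 0) : HasDerivAt (fun τ => c / τ) (-(c / x ^ 2)) x := by
  simpa [div_eq_mul_inv] using (hasDerivAt_inv hx).const_mul c

theorem hasDerivAt_mul_exp_div_sub_one (hx : x ≠ 0) :
    HasDerivAt (fun τ => τ * (exp (c / τ) - 1)) (exp (c / x) * (1 - c / x) - 1) x := by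
  have hdiv := hasDerivAt_const_div (c := c) hx
  refine ((hasDerivAt_id' x).mul (hdiv.exp.sub_const 1)).congr_deriv ?_
  field_simp
  ring

theorem hasDerivAt_exp_div_mul_one_sub_div_sub_one (hx : x ≠ 0) :
    HasDerivAt (fun τ => exp (c / τ) * (1 - c / τ) - 1) (exp (c / x) * (c ^ 2 / x ^ 3)) x := by
  have hdiv := hasDerivAt_const_div (c := c) hx
  refine ((hdiv.exp.mul (hdiv.const_sub 1)).sub_const 1).congr_deriv ?_
  field_simp
  ring

theorem exp_mul_one_sub_lt_one {u : ℝ} (hu : u ≠ 0) : exp u * (1 - u) < 1 := by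
  have h := add_one_lt_exp (neg_ne_zero.mpr hu)
  calc exp u * (1 - u) < exp u * exp (-u) := by gcongr; linarith
    _ = 1 := by rw [← exp_add, add_neg_cancel, exp_zero]

theorem strictAntiOn_mul_exp_div_sub_one (hc : c ≠ 0) :
    StrictAntiOn (fun τ => τ * (exp (c / τ) - 1)) (Ioi 0) := by
  refine strictAntiOn_of_hasDerivWithinAt_neg (f' := fun y => exp (c / y) * (1 - c / y) - 1)
    (convex_Ioi 0)
    (fun y hy => (hasDerivAt_mul_exp_div_sub_one hy.ne').continuousAt.continuousWithinAt)
    (fun y hy => ?_) fun y hy => ?_ <;> simp only [interior_Ioi] at hy ⊢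
  · exact (hasDerivAt_mul_exp_div_sub_one hy.ne').hasDerivWithinAt
  · exact sub_neg.mpr (exp_mul_one_sub_lt_one (div_ne_zero hc hy.ne'))

theorem convexOn_mul_exp_div_sub_one :
    ConvexOn ℝ (Ioi 0) (fun τ => τ * (exp (c / τ) - 1)) := by
  refine convexOn_of_hasDerivWithinAt2_nonneg (f' := fun y => exp (c / y) * (1 - c / y) - 1)
    (f'' := fun y => exp (c / y) * (c ^ 2 / y ^ 3)) (convex_Ioi 0)
    (fun y hy => (hasDerivAt_mul_exp_div_sub_one hy.ne').continuousAt.continuousWithinAt)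
    (fun y hy => ?_) (fun y hy => ?_) fun y hy => ?_ <;> simp only [interior_Ioi] at hy ⊢
  · exact (hasDerivAt_mul_exp_div_sub_one hy.ne').hasDerivWithinAt
  · exact (hasDerivAt_exp_div_mul_one_sub_div_sub_one hy.ne').hasDerivWithinAt
  · have hy : (0 : ℝ) < y := hy
    positivity

end ExpPerspective

theorem two_rpow_div_eq_exp (D W τ : ℝ) :
    (2 : ℝ) ^ (D / (W * τ)) = exp (D * log 2 / W / τ) := by
  rw [rpow_def_of_pos two_pos]
  congr 1
  ring

/-- The implicitly defined minimum transmission time `τ(τ₀)`, satisfying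
`τ₀ = (τ(τ₀)/γ)(2^{D/(W·τ(τ₀))} − 1)`, is strictly decreasing and convex on its
domain `(D·ln 2/(W·γ), ∞)`. -/
theorem stmt_16 (D W γ : ℝ) (hD : 0 < D) (hW : 0 < W) (hγ : 0 < γ)
    (t : ℝ → ℝ)
    (ht : ∀ τ₀ ∈ Set.Ioi (D * Real.log 2 / (W * γ)), 0 < t τ₀ ∧
      τ₀ = (t τ₀ / γ) * ((2 : ℝ) ^ (D / (W * t τ₀)) - 1)) :
    StrictAntiOn t (Set.Ioi (D * Real.log 2 / (W * γ))) ∧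
    ConvexOn ℝ (Set.Ioi (D * Real.log 2 / (W * γ))) t := by
  set c := D * log 2 / W
  set g : ℝ → ℝ := fun τ => τ * (exp (c / τ) - 1)
  have hc : c ≠ 0 := by have := log_pos one_lt_two; positivity
  have hmaps : MapsTo t (Ioi (D * log 2 / (W * γ))) (Ioi 0) := fun τ₀ h => (ht τ₀ h).1
  have hcomp : EqOn (fun τ₀ => γ * τ₀) (g ∘ t) (Ioi (D * log 2 / (W * γ))) := by
    intro τ₀ h
    obtain ⟨-, hτ₀⟩ := ht τ₀ h
    show γ * τ₀ = t τ₀ * (exp (D * log 2 / W / t τ₀) - 1)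
    rw [← two_rpow_div_eq_exp]
    conv_lhs => rw [hτ₀]
    field_simp
  exact ⟨(strictAntiOn_mul_exp_div_sub_one hc).strictAntiOn_of_strictMonoOn_comp hmaps
      ((strictMono_mul_left_of_pos hγ).strictMonoOn _ |>.congr hcomp),
    convexOn_mul_exp_div_sub_one.convexOn_of_concaveOn_comp
      (strictAntiOn_mul_exp_div_sub_one hc) hmaps
      ((concaveOn_id (convex_Ioi _)).smul hγ.le |>.congr hcomp)⟩
end
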